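/- arXiv:2603.09059 — 2 statements merged into one kernel-verified Lean document; each statement's English description precedes it below -/
import Mathlib

section
/- Let l1, l2, l3 be positive integers with 1 ≤ l1 ≤ l2 ≤ l3, and let n = l1 + l2 + l3 - 1. The quadratic polynomial 1 + (n-1)q + (C(n,2) - C(l1,2) - C(l2,2) - C(l3,2))q^2 has all real roots if and only if l1 ≤ l2 + l3 - 2√(l2 l3). -/
/-!
With `n + 1 = l1 + l2 + l3`, the quadratic coefficient simplifies to
`A = l1 l2 + l1 l3 + l2 l3 - n > 0`, and the discriminant of `1 + (n - 1) q + A q²` becomes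
`(n + 1)² - 4 (l1 l2 + l1 l3 + l2 l3) = (l2 + l3 - l1)² - 4 l2 l3`.
As `l2 + l3 - l1 ≥ 0`, the discriminant is nonnegative iff `2 √(l2 l3) ≤ l2 + l3 - l1`.
-/

open Complex

theorem Complex.forall_quadratic_eq_zero_im_eq_zero_iff {a b c : ℝ} (ha : a ≠ 0) :
    (∀ z : ℂ, a * (z * z) + b * z + c = 0 → z.im = 0) ↔ 0 ≤ discrim a b c := by
  have ha' : (a : ℂ) ≠ 0 := ofReal_ne_zero.mpr ha
  have hdisc : discrim (a : ℂ) b c = ((discrim a b c : ℝ) : ℂ) := by simp [discrim]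
  constructor
  · intro hreal
    by_contra! hneg
    have hs : discrim (a : ℂ) b c = (√(-discrim a b c) * I) * (√(-discrim a b c) * I) := by
      rw [hdisc, mul_mul_mul_comm, ← ofReal_mul, Real.mul_self_sqrt (by linarith), I_mul_I]
      push_cast
      ring
    have him := hreal _ ((quadratic_eq_zero_iff ha' hs _).mpr (Or.inl rfl))
    have him_eq :
        ((-(b : ℂ) + √(-discrim a b c) * I) / (2 * a)).im = √(-discrim a b c) / (2 * a) := by
      simp [div_im]
      field_simp
    rw [him_eq, div_eq_zero_iff] at him
    rcases him with hsqrt | htwo_a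
    · exact (Real.sqrt_pos.mpr (neg_pos.mpr hneg)).ne' hsqrt
    · exact mul_ne_zero two_ne_zero ha htwo_a
  · intro hnonneg z hz
    have hs : discrim (a : ℂ) b c = (√(discrim a b c) : ℂ) * √(discrim a b c) := by
      rw [hdisc, ← ofReal_mul, Real.mul_self_sqrt hnonneg]
    rcases (quadratic_eq_zero_iff ha' hs z).mp hz with rfl | rfl <;> norm_cast

theorem Real.two_mul_sqrt_le_iff {x p : ℝ} (hx : 0 ≤ x) (hp : 0 ≤ p) :
    2 * √p ≤ x ↔ 4 * p ≤ x ^ 2 := by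
  rw [← pow_le_pow_iff_left₀ (by positivity) hx two_ne_zero, mul_pow, Real.sq_sqrt hp]
  norm_num

theorem choose_two_sub_sum_choose_two {l1 l2 l3 n : ℕ} (hn : n + 1 = l1 + l2 + l3) :
    (n.choose 2 : ℤ) - l1.choose 2 - l2.choose 2 - l3.choose 2 =
      l1 * l2 + l1 * l3 + l2 * l3 - n := by
  have hn' : (n : ℚ) = l1 + l2 + l3 - 1 := by
    rw [eq_sub_iff_add_eq]
    exact_mod_cast hn
  qify
  simp only [Nat.cast_choose_two, hn']
  ring

/-- For the Θ-graph with path lengths `1 ≤ l1 ≤ l2 ≤ l3` and `n = l1+l2+l3-1`,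
the quadratic `1 + (n-1) q + (C(n,2) - C(l1,2) - C(l2,2) - C(l3,2)) q²` has all
real roots iff `l1 ≤ l2 + l3 - 2√(l2 l3)`. -/
theorem theta_graph_real_rooted_iff (l1 l2 l3 n : ℕ)
    (h1 : 1 ≤ l1) (h12 : l1 ≤ l2) (h23 : l2 ≤ l3)
    (hn : n = l1 + l2 + l3 - 1) :
    (∀ z : ℂ, 1 + ((n : ℂ) - 1) * z +
        (((n.choose 2 : ℤ) - l1.choose 2 - l2.choose 2 - l3.choose 2 : ℤ) : ℂ) * z ^ 2 = 0 →
        z.im = 0) ↔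
      (l1 : ℝ) ≤ (l2 : ℝ) + l3 - 2 * Real.sqrt (l2 * l3) := by
  have hn_succ : n + 1 = l1 + l2 + l3 := by omega
  have hn' : (n : ℝ) = l1 + l2 + l3 - 1 := by
    rw [eq_sub_iff_add_eq]
    exact_mod_cast hn_succ
  have hl1 : (1 : ℝ) ≤ l1 := by exact_mod_cast h1
  have hl12 : (l1 : ℝ) ≤ l2 := by exact_mod_cast h12
  have hl23 : (l2 : ℝ) ≤ l3 := by exact_mod_cast h23
  set A : ℝ := l1 * l2 + l1 * l3 + l2 * l3 - n
  have hA_pos : 0 < A := by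
    simp only [A, hn']
    nlinarith [mul_nonneg (sub_nonneg.mpr hl1) (sub_nonneg.mpr (hl1.trans hl12))]
  have hpoly (z : ℂ) :
      1 + ((n : ℂ) - 1) * z +
          (((n.choose 2 : ℤ) - l1.choose 2 - l2.choose 2 - l3.choose 2 : ℤ) : ℂ) * z ^ 2 =
        A * (z * z) + ((n - 1 : ℝ) : ℂ) * z + ((1 : ℝ) : ℂ) := by
    rw [choose_two_sub_sum_choose_two hn_succ]
    push_cast [A]
    ring
  have hdisc : discrim A (n - 1) 1 = (l2 + l3 - l1) ^ 2 - 4 * (l2 * l3) := by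
    simp only [discrim, A, hn']
    ring
  simp_rw [hpoly, forall_quadratic_eq_zero_im_eq_zero_iff hA_pos.ne', hdisc, sub_nonneg,
    le_sub_comm (a := (l1 : ℝ))]
  exact (Real.two_mul_sqrt_le_iff (by linarith) (by positivity)).symm
end

section
/- Let d ≥ 2 and h(q) = 1 + (n-1)q + H_2 q^2 + ... + H_d q^d be a real polynomial with positive coefficients, where H_2 = C(m,2) - c_2 - (d-1)(n-1) - C(d,2), m = n + d - 1, and (2c_2 - n+1)m - 2c_2(n-1) < 0. Then h has a nonreal root. -/
/-!
If every root of `h` were real, so would be every root of its reversal `q^d h(1/q)`, a monic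
polynomial of degree `d` whose next two coefficients are `H₁` and `H₂`. Newton's inequality
`2d e₂ ≤ (d-1) e₁²` for its `d` real roots, which is Cauchy–Schwarz `(∑ v)² ≤ d ∑ v²` in
disguise, then gives `2d H₂ ≤ (d-1) H₁²`. Since `H₂ = C(n,2) - c₂` and `m = (n-1) + d`, this says
`(n-1) m ≤ 2d c₂`, while the hypothesis on `c₂` says `2d c₂ < (n-1) m`.
-/

open Polynomial

namespace Multiset

variable {R : Type*}

theorem esymm_one [CommSemiring R] (s : Multiset R) : s.esymm 1 = s.sum := by
  simp [esymm, powersetCard_one]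

theorem esymm_succ_cons [CommSemiring R] (a : R) (s : Multiset R) (k : ℕ) :
    (a ::ₘ s).esymm (k + 1) = s.esymm (k + 1) + a * s.esymm k := by
  simp [esymm, powersetCard_cons, sum_map_mul_left]

theorem sq_sum_eq_sum_sq_add_two_mul_esymm_two [CommSemiring R] (s : Multiset R) :
    s.sum ^ 2 = (s.map (· ^ 2)).sum + 2 * s.esymm 2 := by
  induction s using Multiset.induction with
  | empty => simp [esymm, powersetCard_zero_right]
  | cons a s ih =>
    rw [sum_cons, map_cons, sum_cons, esymm_succ_cons, esymm_one, add_sq, ih]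
    ring

theorem sq_sum_le_card_mul_sum_sq [Semiring R] [LinearOrder R] [IsStrictOrderedRing R]
    [ExistsAddOfLE R] (s : Multiset R) : s.sum ^ 2 ≤ card s * (s.map (· ^ 2)).sum := by
  have h := _root_.sq_sum_le_card_mul_sum_sq (s := (Finset.univ : Finset s)) (f := ((↑) : s → R))
  rwa [Finset.sum_eq_multiset_sum, Finset.sum_eq_multiset_sum, map_univ_coe, Finset.card_univ,
    card_coe, ← Function.comp_def (fun x : R => x ^ 2), map_univ_comp_coe] at h

theorem two_mul_card_mul_esymm_two_le [CommRing R] [LinearOrder R] [IsStrictOrderedRing R]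
    (s : Multiset R) : 2 * card s * s.esymm 2 ≤ (card s - 1) * s.esymm 1 ^ 2 := by
  have hcs := s.sq_sum_le_card_mul_sum_sq
  have hid := s.sq_sum_eq_sum_sq_add_two_mul_esymm_two
  rw [esymm_one]
  linear_combination hcs - (card s : R) * hid

end Multiset

namespace Polynomial

section Semiring

variable {R : Type*} [Semiring R]

theorem coeff_reflect_sub (p : R[X]) {N k : ℕ} (hk : k ≤ N) :
    (p.reflect N).coeff (N - k) = p.coeff k := by
  rw [coeff_reflect, revAt_le (Nat.sub_le N k), Nat.sub_sub_self hk]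

theorem natDegree_reflect_of_coeff_zero_ne_zero {p : R[X]} {N : ℕ} (hN : p.natDegree ≤ N)
    (h0 : p.coeff 0 ≠ 0) : (p.reflect N).natDegree = N := by
  refine le_antisymm (natDegree_reflect_le.trans (max_le le_rfl hN)) (le_natDegree_of_ne_zero ?_)
  rwa [coeff_reflect, revAt_le le_rfl, Nat.sub_self]

theorem coeff_sum_range_C_mul_X_pow (a : ℕ → R) {d k : ℕ} (hk : k ≤ d) :
    (∑ i ∈ Finset.range (d + 1), C (a i) * X ^ i).coeff k = a k := by
  simp [Nat.lt_succ_iff.mpr hk]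

theorem natDegree_sum_range_C_mul_X_pow_le (a : ℕ → R) (d : ℕ) :
    (∑ i ∈ Finset.range (d + 1), C (a i) * X ^ i).natDegree ≤ d :=
  natDegree_sum_le_of_forall_le _ _ fun _ hi =>
    (natDegree_C_mul_X_pow_le _ _).trans (Nat.lt_succ_iff.mp (Finset.mem_range.mp hi))

end Semiring

theorem Splits.two_mul_natDegree_mul_leadingCoeff_mul_coeff_le {K : Type*} [Field K]
    [LinearOrder K] [IsStrictOrderedRing K] {p : K[X]} (hp : p.Splits) (h2 : 2 ≤ p.natDegree) :
    2 * p.natDegree * (p.leadingCoeff * p.coeff (p.natDegree - 2)) ≤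
      (p.natDegree - 1) * p.coeff (p.natDegree - 1) ^ 2 := by
  have hcoeff1 := coeff_eq_esymm_roots_of_splits hp (k := p.natDegree - 1) (by omega)
  have hcoeff2 := coeff_eq_esymm_roots_of_splits hp (k := p.natDegree - 2) (by omega)
  rw [Nat.sub_sub_self (by omega)] at hcoeff1 hcoeff2
  have newton := p.roots.two_mul_card_mul_esymm_two_le
  rw [← hp.natDegree_eq_card_roots] at newton
  rw [hcoeff1, hcoeff2]
  linear_combination p.leadingCoeff ^ 2 * newton

def IsRealRooted (p : ℝ[X]) : Prop :=
  ∀ z : ℂ, p.eval₂ Complex.ofRealHom z = 0 → z.im = 0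

namespace IsRealRooted

variable {p : ℝ[X]}

theorem splits (hp : p.IsRealRooted) : p.Splits := by
  rcases eq_or_ne p 0 with rfl | hp0
  · exact Splits.zero
  refine Splits.of_splits_map_of_injective (i := Complex.ofRealHom) Complex.ofReal_injective
    (IsAlgClosed.splits _) fun z hz => ⟨z.re, Complex.ext (by simp) ?_⟩
  simp [hp z ((mem_roots_map hp0).1 hz)]

theorem reflect (hp : p.IsRealRooted) {N : ℕ} (hN : p.natDegree ≤ N) :
    (p.reflect N).IsRealRooted := by
  intro z hz
  rcases eq_or_ne z 0 with rfl | hz0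
  · rfl
  have := invertibleOfNonzero (inv_ne_zero hz0)
  rw [← inv_inv z, ← invOf_eq_inv, eval₂_reflect_eq_zero_iff _ _ _ _ hN] at hz
  have him := hp _ hz
  rwa [Complex.inv_im, neg_div, neg_eq_zero, div_eq_zero_iff,
    Complex.normSq_eq_zero, or_iff_left hz0] at him

theorem two_mul_coeff_zero_mul_coeff_two_le (hp : p.IsRealRooted) {N : ℕ}
    (hN : p.natDegree ≤ N) (h2 : 2 ≤ N) :
    2 * N * (p.coeff 0 * p.coeff 2) ≤ (N - 1) * p.coeff 1 ^ 2 := by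
  rcases eq_or_ne (p.coeff 0) 0 with h0 | h0
  · have : (1 : ℝ) ≤ N := by exact_mod_cast (by omega : 1 ≤ N)
    rw [h0, zero_mul, mul_zero]
    exact mul_nonneg (by linarith) (sq_nonneg _)
  have hdeg := natDegree_reflect_of_coeff_zero_ne_zero hN h0
  have newton := (hp.reflect hN).splits.two_mul_natDegree_mul_leadingCoeff_mul_coeff_le
    (by rwa [hdeg])
  have hlead : (p.reflect N).coeff N = p.coeff 0 := by simp
  rwa [leadingCoeff, hdeg, hlead, coeff_reflect_sub p (by omega), coeff_reflect_sub p (by omega)]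
    at newton

end IsRealRooted

end Polynomial

theorem H_polynomial_nonreal_root_general (n m d : ℕ) (hd : 2 ≤ d)
    (hmnd : m + 1 = n + d) (c2 : ℝ) (H : ℕ → ℝ)
    (hH0 : H 0 = 1) (hH1 : H 1 = (n : ℝ) - 1)
    (hH2 : H 2 = (m.choose 2 : ℝ) - c2 - ((d : ℝ) - 1) * ((n : ℝ) - 1) - (d.choose 2 : ℝ))
    (hineq : (2 * c2 - (n : ℝ) + 1) * m - 2 * c2 * ((n : ℝ) - 1) < 0) :
    ∃ z : ℂ, (∑ i ∈ Finset.range (d + 1), (H i : ℂ) * z ^ i) = 0 ∧ z.im ≠ 0 := by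
  by_contra! hreal
  set h : ℝ[X] := ∑ i ∈ Finset.range (d + 1), C (H i) * X ^ i
  have hh : h.IsRealRooted := fun z hz => hreal z (by simpa [h, eval₂_finsetSum] using hz)
  have newton :=
    hh.two_mul_coeff_zero_mul_coeff_two_le (natDegree_sum_range_C_mul_X_pow_le H d) hd
  rw [coeff_sum_range_C_mul_X_pow H (by omega), coeff_sum_range_C_mul_X_pow H (by omega),
    coeff_sum_range_C_mul_X_pow H (by omega), hH0, hH1, hH2, Nat.cast_choose_two,
    Nat.cast_choose_two] at newton
  have hm : (m : ℝ) = n + d - 1 := by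
    rw [eq_sub_iff_add_eq]; exact_mod_cast hmnd
  rw [hm] at newton hineq
  linarith

/-- If `h(q) = 1 + (n-1)q + H_2 q² + ⋯ + H_d q^d` has positive coefficients,
`H_2 = C(m,2) - c_2 - (d-1)(n-1) - C(d,2)` with `m = n + d - 1`, and
`(2c_2 - n + 1)m - 2c_2(n-1) < 0`, then `h` has a nonreal root. -/
theorem H_polynomial_nonreal_root (n m d : ℕ) (hn : 2 ≤ n) (hd : 2 ≤ d)
    (hmnd : m + 1 = n + d) (c2 : ℝ) (H : ℕ → ℝ)
    (hpos : ∀ i ≤ d, 0 < H i)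
    (hH0 : H 0 = 1) (hH1 : H 1 = (n : ℝ) - 1)
    (hH2 : H 2 = (m.choose 2 : ℝ) - c2 - ((d : ℝ) - 1) * ((n : ℝ) - 1) - (d.choose 2 : ℝ))
    (hineq : (2 * c2 - (n : ℝ) + 1) * m - 2 * c2 * ((n : ℝ) - 1) < 0) :
    ∃ z : ℂ, (∑ i ∈ Finset.range (d + 1), (H i : ℂ) * z ^ i) = 0 ∧ z.im ≠ 0 :=
  H_polynomial_nonreal_root_general n m d hd hmnd c2 H hH0 hH1 hH2 hineq
end
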